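/- Let α ∈ [0,1) and let n ≥ 8 be an integer. Then the A_α-spectral radius ρ_α(K₂ ∨ (K_{n−6} ∪ 4K₁)) equals the largest real root of ψ(x) = 0, where ψ(x) = x³ − ((α+1)n + 2α − 6)x² + (αn² + (2α²−3α−1)n − 4α − 3)x − 2α²n² + (18α²−14α+8)n − 72α² + 118α − 56. -/

import Mathlib

open Finset

/-- The join `G ∨g H` of two graphs: the disjoint union together with all edges
between the two parts. -/
def SimpleGraph.gjoin {α β : Type*} (G : SimpleGraph α) (H : SimpleGraph β) :
    SimpleGraph (α ⊕ β) where
  Adj u v := match u, v with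
    | Sum.inl u, Sum.inl v => G.Adj u v
    | Sum.inr u, Sum.inr v => H.Adj u v
    | _, _ => True
  symm := ⟨fun u v => match u, v with
    | Sum.inl u, Sum.inl v => G.adj_symm
    | Sum.inr u, Sum.inr v => H.adj_symm
    | Sum.inl _, Sum.inr _ | Sum.inr _, Sum.inl _ => fun _ => trivial⟩
  loopless := ⟨fun u => by cases u <;> simp⟩

infixl:60 " ∨g " => SimpleGraph.gjoin

/-- The `A_α`-matrix `α • D(G) + (1-α) • A(G)` of a graph `G`. -/
noncomputable def aAlphaMatrix {V : Type*} [Fintype V] [DecidableEq V]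
    (α : ℝ) (G : SimpleGraph V) : Matrix V V ℝ := by
  classical
  exact α • Matrix.diagonal (fun v => (G.degree v : ℝ)) + (1 - α) • G.adjMatrix ℝ

/-- The `A_α`-spectral radius `ρ_α(G)`: the largest eigenvalue of `A_α(G)`. -/
noncomputable def rhoAlpha {V : Type*} [Fintype V] [DecidableEq V]
    (α : ℝ) (G : SimpleGraph V) : ℝ :=
  sSup (spectrum ℝ (aAlphaMatrix α G))

/-- The signless Laplacian matrix `Q(G) = D(G) + A(G)`. -/
noncomputable def signlessLaplacian {V : Type*} [Fintype V] [DecidableEq V]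
    (G : SimpleGraph V) : Matrix V V ℝ := by
  classical
  exact Matrix.diagonal (fun v => (G.degree v : ℝ)) + G.adjMatrix ℝ

/-- `q(G)`: the largest eigenvalue of the signless Laplacian matrix of `G`. -/
noncomputable def qIndex {V : Type*} [Fintype V] [DecidableEq V]
    (G : SimpleGraph V) : ℝ :=
  sSup (spectrum ℝ (signlessLaplacian G))

/-- The number of edges (the size) of a graph. -/
noncomputable def edgeCount {V : Type*} [Fintype V] [DecidableEq V]
    (G : SimpleGraph V) : ℕ := by
  classical
  exact G.edgeFinset.card

/-- `i(G - S)`: the number of isolated vertices of the graph obtained from `G`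
by deleting the vertices of `S` together with all edges incident to `S`. -/
noncomputable def isolGminus {V : Type*} [Fintype V] [DecidableEq V]
    (G : SimpleGraph V) (S : Finset V) : ℕ := by
  classical
  exact (Finset.univ.filter (fun v => v ∉ S ∧ ∀ u, G.Adj v u → u ∈ S)).card

/-- `F(n)`: the edge bound from Theorem 1.1. -/
def Fbound (n : ℕ) : ℕ :=
  if n = 6 then 9 else if n = 8 then 18 else (n - 2).choose 2 + 2

/-- `f(α)`: the order bound from Theorem 1.2. -/
noncomputable def fAlpha (α : ℝ) : ℝ :=
  if α ≤ 1 / 2 then 20 else if α ≤ 5 / 7 then 25 else 7 / (1 - α) + 3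

/-- The graph `K₂ ∨ (K_{n-6} ∪ 4K₁)`. -/
def G3 (n : ℕ) : SimpleGraph (Fin 2 ⊕ (Fin (n - 6) ⊕ Fin 4)) :=
  (⊤ : SimpleGraph (Fin 2)) ∨g ((⊤ : SimpleGraph (Fin (n - 6))) ⊕g (⊥ : SimpleGraph (Fin 4)))

/-!
The partition of `K_s ∨ (K_m ∪ tK₁)` into its three parts is equitable: `A_α` maps vectors
constant on the parts to such vectors, acting on them by a `3 × 3` quotient matrix `B`, so
`spec B ⊆ spec A_α`. Conversely, on each part `(A_α v)(u)` is `c · v(u)` plus a term that does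
not depend on `u`, so an eigenvector for an eigenvalue other than the three constants `c` is
constant on the parts, and `spec A_α ⊆ spec B ∪ {c₁, c₂, c₃}`. For `s = 2`, `t = 4` the
characteristic polynomial of `B` is `ψ`, and `ψ` is non-positive at a point above every `cᵢ`,
so `ψ` has a root above them. Hence the largest eigenvalue of `A_α` is a root of `ψ`, and it
bounds every root of `ψ`.
-/

open Matrix Finset

theorem Matrix.mem_spectrum_iff_exists_mulVec_eq_smul {ι K : Type*} [Fintype ι] [DecidableEq ι]
    [Field K] (A : Matrix ι ι K) (μ : K) :
    μ ∈ spectrum K A ↔ ∃ v ≠ 0, A *ᵥ v = μ • v := by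
  rw [← Matrix.spectrum_toLin', ← Module.End.hasEigenvalue_iff_mem_spectrum,
    Module.End.hasEigenvalue_iff, Submodule.ne_bot_iff]
  simp [and_comm]

theorem Matrix.mem_spectrum_iff_det_eq_zero {ι K : Type*} [Fintype ι] [DecidableEq ι]
    [Field K] (A : Matrix ι ι K) (μ : K) :
    μ ∈ spectrum K A ↔ (algebraMap K (Matrix ι ι K) μ - A).det = 0 := by
  rw [spectrum.mem_iff, Matrix.isUnit_iff_isUnit_det, isUnit_iff_ne_zero, not_not]

theorem isGreatest_csSup_of_subset_union {γ : Type*} [ConditionallyCompleteLinearOrder γ]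
    {S R E : Set γ} (hS : S.Finite) (hRS : R ⊆ S) (hSRE : S ⊆ R ∪ E) {z : γ} (hz : z ∈ R)
    (hE : ∀ e ∈ E, e ≤ z) : IsGreatest R (sSup S) := by
  have hle : ∀ x ∈ S, x ≤ sSup S := fun x hx => le_csSup hS.bddAbove hx
  refine ⟨?_, fun x hx => hle x (hRS hx)⟩
  rcases hSRE (Set.Nonempty.csSup_mem ⟨z, hRS hz⟩ hS) with hR | hE'
  · exact hR
  · have : sSup S = z := le_antisymm (hE _ hE') (hle z (hRS hz))
    exact this ▸ hz

theorem cubic_pos_of_le {a b c x : ℝ} (hx : 1 + |a| + |b| + |c| ≤ x) :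
    0 < x ^ 3 + a * x ^ 2 + b * x + c := by
  have hx1 : 1 ≤ x := by linarith [abs_nonneg a, abs_nonneg b, abs_nonneg c]
  have hx2 : x ≤ x ^ 2 := by nlinarith
  have ha : -(|a| * x ^ 2) ≤ a * x ^ 2 := by nlinarith [neg_abs_le a]
  have hb : -(|b| * x ^ 2) ≤ b * x := by
    nlinarith [neg_abs_le b, mul_le_mul_of_nonneg_left hx2 (abs_nonneg b)]
  have hc : -(|c| * x ^ 2) ≤ c := by
    nlinarith [neg_abs_le c, mul_le_mul_of_nonneg_left (hx1.trans hx2) (abs_nonneg c)]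
  nlinarith

theorem exists_root_ge_of_cubic {f : ℝ → ℝ} {a b c t : ℝ}
    (hf : ∀ x, f x = x ^ 3 + a * x ^ 2 + b * x + c) (ht : f t ≤ 0) :
    ∃ z, t ≤ z ∧ f z = 0 := by
  set X := max t (1 + |a| + |b| + |c|)
  have hX : 0 ≤ f X := (hf X ▸ cubic_pos_of_le (le_max_right _ _)).le
  have hcont : Continuous f := by
    rw [show f = fun x => x ^ 3 + a * x ^ 2 + b * x + c from funext hf]
    fun_prop
  obtain ⟨z, hz, hz0⟩ := intermediate_value_Icc (le_max_left t _) hcont.continuousOn ⟨ht, hX⟩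
  exact ⟨z, hz.1, hz0⟩

theorem aAlphaMatrix_mulVec_apply {V : Type*} [Fintype V] [DecidableEq V] (α : ℝ)
    (G : SimpleGraph V) [DecidableRel G.Adj] (f : V → ℝ) (v : V) :
    (aAlphaMatrix α G *ᵥ f) v = ∑ u ∈ G.neighborFinset v, (α * f v + (1 - α) * f u) := by
  rw [sum_add_distrib, sum_const, SimpleGraph.card_neighborFinset_eq_degree, ← mul_sum,
    nsmul_eq_mul]
  simp only [aAlphaMatrix, add_mulVec, smul_mulVec, mulVec_diagonal,
    SimpleGraph.adjMatrix_mulVec_apply, Pi.add_apply, Pi.smul_apply, smul_eq_mul]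
  rw [mul_left_comm]
  congr 3 <;> convert rfl

def psi (α n x : ℝ) : ℝ :=
  x ^ 3 - ((α + 1) * n + 2 * α - 6) * x ^ 2
    + (α * n ^ 2 + (2 * α ^ 2 - 3 * α - 1) * n - 4 * α - 3) * x
    - 2 * α ^ 2 * n ^ 2 + (18 * α ^ 2 - 14 * α + 8) * n - 72 * α ^ 2 + 118 * α - 56

theorem exists_psi_root_ge (α n : ℝ) {t : ℝ} (ht : psi α n t ≤ 0) :
    ∃ z, t ≤ z ∧ psi α n z = 0 :=
  exists_root_ge_of_cubic (a := -((α + 1) * n + 2 * α - 6))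
    (b := α * n ^ 2 + (2 * α ^ 2 - 3 * α - 1) * n - 4 * α - 3)
    (c := -2 * α ^ 2 * n ^ 2 + (18 * α ^ 2 - 14 * α + 8) * n - 72 * α ^ 2 + 118 * α - 56)
    (fun x => by unfold psi; ring) ht

theorem exists_psi_nonpos {α m : ℝ} (hα0 : 0 ≤ α) (hα1 : α < 1) (hm : 1 ≤ m) :
    ∃ t, psi α (m + 6) t ≤ 0 ∧ α * (m + 6) - 1 ≤ t ∧ α * 2 ≤ t := by
  by_cases h : m ≤ α * (m + 4)
  -- `α (m + 4) + 1` is the top-left entry of the quotient matrix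
  · refine ⟨α * (m + 4) + 1, ?_, by linarith, by nlinarith⟩
    have hψ : psi α (m + 6) (α * (m + 4) + 1)
        = (1 - α) ^ 2 * (-2 * α * (m + 4) * (m + 2) + 6 * m - 16) := by
      unfold psi; ring
    have hneg : -2 * α * (m + 4) * (m + 2) + 6 * m - 16 ≤ 0 := by
      nlinarith [mul_le_mul_of_nonneg_right h (by linarith : (0 : ℝ) ≤ m + 2)]
    exact hψ ▸ mul_nonpos_of_nonneg_of_nonpos (sq_nonneg _) hneg
  · refine ⟨m + 1, ?_, by linarith, by nlinarith⟩
    have hψ : psi α (m + 6) (m + 1) = 8 * (α - 1) * (α * (m - 3) + 2) := by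
      unfold psi; ring
    have hpos : 0 ≤ α * (m - 3) + 2 := by nlinarith
    exact hψ ▸ mul_nonpos_of_nonpos_of_nonneg (by linarith) hpos

def completeJoinCompleteSumEmpty (s m t : ℕ) : SimpleGraph (Fin s ⊕ (Fin m ⊕ Fin t)) :=
  (⊤ : SimpleGraph (Fin s)) ∨g ((⊤ : SimpleGraph (Fin m)) ⊕g (⊥ : SimpleGraph (Fin t)))

namespace completeJoinCompleteSumEmpty

variable {s m t : ℕ}

section NeighborSums

variable [DecidableRel (completeJoinCompleteSumEmpty s m t).Adj] {M : Type*} [AddCommGroup M]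
  (g : Fin s ⊕ (Fin m ⊕ Fin t) → M)

theorem sum_neighborFinset_inl (i : Fin s) :
    ∑ u ∈ (completeJoinCompleteSumEmpty s m t).neighborFinset (.inl i), g u
      = ∑ u, g u - g (.inl i) := by
  rw [SimpleGraph.neighborFinset_eq_filter, sum_filter]
  simp only [Fintype.sum_sum_type]
  simp [completeJoinCompleteSumEmpty, SimpleGraph.gjoin, sum_ite, filter_ne, sum_erase_eq_sub]
  abel

theorem sum_neighborFinset_inr_inl (j : Fin m) :
    ∑ u ∈ (completeJoinCompleteSumEmpty s m t).neighborFinset (.inr (.inl j)), g u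
      = ∑ i, g (.inl i) + ∑ j', g (.inr (.inl j')) - g (.inr (.inl j)) := by
  rw [SimpleGraph.neighborFinset_eq_filter, sum_filter]
  simp only [Fintype.sum_sum_type]
  simp [completeJoinCompleteSumEmpty, SimpleGraph.gjoin, sum_ite, filter_ne, sum_erase_eq_sub]
  abel

theorem sum_neighborFinset_inr_inr (k : Fin t) :
    ∑ u ∈ (completeJoinCompleteSumEmpty s m t).neighborFinset (.inr (.inr k)), g u
      = ∑ i, g (.inl i) := by
  rw [SimpleGraph.neighborFinset_eq_filter, sum_filter]
  simp only [Fintype.sum_sum_type]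
  simp [completeJoinCompleteSumEmpty, SimpleGraph.gjoin]

end NeighborSums

variable (α : ℝ) (f : Fin s ⊕ (Fin m ⊕ Fin t) → ℝ)

theorem aAlphaMatrix_mulVec_inl (i : Fin s) :
    (aAlphaMatrix α (completeJoinCompleteSumEmpty s m t) *ᵥ f) (.inl i)
      = (α * (s + m + t) - 1) * f (.inl i) + (1 - α) * ∑ u, f u := by
  classical
  rw [aAlphaMatrix_mulVec_apply, sum_neighborFinset_inl]
  simp [sum_add_distrib, Fintype.sum_sum_type, ← mul_sum]
  ring

theorem aAlphaMatrix_mulVec_inr_inl (j : Fin m) :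
    (aAlphaMatrix α (completeJoinCompleteSumEmpty s m t) *ᵥ f) (.inr (.inl j))
      = (α * (s + m) - 1) * f (.inr (.inl j))
        + (1 - α) * (∑ i, f (.inl i) + ∑ j', f (.inr (.inl j'))) := by
  classical
  rw [aAlphaMatrix_mulVec_apply, sum_neighborFinset_inr_inl]
  simp [sum_add_distrib, ← mul_sum]
  ring

theorem aAlphaMatrix_mulVec_inr_inr (k : Fin t) :
    (aAlphaMatrix α (completeJoinCompleteSumEmpty s m t) *ᵥ f) (.inr (.inr k))
      = α * s * f (.inr (.inr k)) + (1 - α) * ∑ i, f (.inl i) := by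
  classical
  rw [aAlphaMatrix_mulVec_apply, sum_neighborFinset_inr_inr]
  simp [sum_add_distrib, ← mul_sum]
  ring

def part : Fin s ⊕ (Fin m ⊕ Fin t) → Fin 3 :=
  Sum.elim (fun _ => 0) (Sum.elim (fun _ => 1) (fun _ => 2))

theorem part_surjective [NeZero s] [NeZero m] [NeZero t] :
    Function.Surjective (part (s := s) (m := m) (t := t)) := by
  intro a
  fin_cases a
  exacts [⟨.inl 0, rfl⟩, ⟨.inr (.inl 0), rfl⟩, ⟨.inr (.inr 0), rfl⟩]

def quotientMatrix (α : ℝ) (s m t : ℕ) : Matrix (Fin 3) (Fin 3) ℝ :=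
  !![α * (s + m + t) - 1 + (1 - α) * s, (1 - α) * m, (1 - α) * t;
     (1 - α) * s, α * (s + m) - 1 + (1 - α) * m, 0;
     (1 - α) * s, 0, α * s]

theorem aAlphaMatrix_mulVec_comp_part (w : Fin 3 → ℝ) :
    aAlphaMatrix α (completeJoinCompleteSumEmpty s m t) *ᵥ (w ∘ part)
      = (quotientMatrix α s m t *ᵥ w) ∘ part := by
  funext u
  rcases u with i | j | k <;>
  simp [aAlphaMatrix_mulVec_inl, aAlphaMatrix_mulVec_inr_inl, aAlphaMatrix_mulVec_inr_inr,
    part, quotientMatrix, Fintype.sum_sum_type, dotProduct, Fin.sum_univ_three] <;>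
  ring

theorem exists_eq_comp_part_of_mulVec_eq_smul {x : ℝ}
    (hv : aAlphaMatrix α (completeJoinCompleteSumEmpty s m t) *ᵥ f = x • f)
    (h₁ : x ≠ α * (s + m + t) - 1) (h₂ : x ≠ α * (s + m) - 1) (h₃ : x ≠ α * s) :
    ∃ w : Fin 3 → ℝ, f = w ∘ part := by
  refine ⟨![(1 - α) * (∑ u, f u) / (x - (α * (s + m + t) - 1)),
    (1 - α) * (∑ i, f (.inl i) + ∑ j, f (.inr (.inl j))) / (x - (α * (s + m) - 1)),
    (1 - α) * (∑ i, f (.inl i)) / (x - α * s)], ?_⟩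
  funext u
  have hu := congrFun hv u
  rw [Pi.smul_apply, smul_eq_mul] at hu
  rcases u with i | j | k
  · rw [aAlphaMatrix_mulVec_inl] at hu
    simp only [Function.comp_apply, part, Sum.elim_inl, Matrix.cons_val_zero]
    rw [eq_div_iff (sub_ne_zero.2 h₁)]
    linarith
  · rw [aAlphaMatrix_mulVec_inr_inl] at hu
    simp only [Function.comp_apply, part, Sum.elim_inl, Sum.elim_inr, Matrix.cons_val_one,
      Matrix.cons_val_zero]
    rw [eq_div_iff (sub_ne_zero.2 h₂)]
    linarith
  · rw [aAlphaMatrix_mulVec_inr_inr] at hu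
    simp only [Function.comp_apply, part, Sum.elim_inr, Matrix.cons_val_two, Matrix.tail_cons,
      Matrix.head_cons]
    rw [eq_div_iff (sub_ne_zero.2 h₃)]
    linarith

theorem mem_spectrum_quotientMatrix_two_four_iff (x : ℝ) :
    x ∈ spectrum ℝ (quotientMatrix α 2 m 4) ↔ psi α (m + 6) x = 0 := by
  have hdet : (algebraMap ℝ _ x - quotientMatrix α 2 m 4).det = psi α (m + 6) x := by
    simp [Matrix.det_fin_three, quotientMatrix, Matrix.algebraMap_matrix_apply, psi]
    ring
  rw [Matrix.mem_spectrum_iff_det_eq_zero, hdet]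

variable [NeZero s] [NeZero m] [NeZero t]

theorem spectrum_quotientMatrix_subset :
    spectrum ℝ (quotientMatrix α s m t)
      ⊆ spectrum ℝ (aAlphaMatrix α (completeJoinCompleteSumEmpty s m t)) := by
  intro x hx
  obtain ⟨w, hw0, hw⟩ := (mem_spectrum_iff_exists_mulVec_eq_smul _ _).1 hx
  refine (mem_spectrum_iff_exists_mulVec_eq_smul _ _).2 ⟨w ∘ part, ?_, ?_⟩
  · exact fun h => hw0 (part_surjective.injective_comp_right h)
  · rw [aAlphaMatrix_mulVec_comp_part, hw]
    rfl

theorem spectrum_aAlphaMatrix_subset :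
    spectrum ℝ (aAlphaMatrix α (completeJoinCompleteSumEmpty s m t))
      ⊆ spectrum ℝ (quotientMatrix α s m t) ∪ {α * (s + m + t) - 1, α * (s + m) - 1, α * s} := by
  intro x hx
  by_contra h
  simp only [Set.mem_union, Set.mem_insert_iff, Set.mem_singleton_iff, not_or] at h
  obtain ⟨hB, h₁, h₂, h₃⟩ := h
  obtain ⟨v, hv0, hv⟩ := (mem_spectrum_iff_exists_mulVec_eq_smul _ _).1 hx
  obtain ⟨w, rfl⟩ := exists_eq_comp_part_of_mulVec_eq_smul α v hv h₁ h₂ h₃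
  refine hB ((mem_spectrum_iff_exists_mulVec_eq_smul _ _).2 ⟨w, fun h => hv0 (by rw [h]; rfl),
    (part_surjective (s := s) (m := m) (t := t)).injective_comp_right ?_⟩)
  show (quotientMatrix α s m t *ᵥ w) ∘ part = (x • w) ∘ part
  rw [← aAlphaMatrix_mulVec_comp_part, hv]
  rfl

end completeJoinCompleteSumEmpty

theorem rhoAlpha_G3_largest_root (α : ℝ) (hα0 : 0 ≤ α) (hα1 : α < 1)
    (n : ℕ) (hn : 8 ≤ n) :
    IsGreatest {x : ℝ | x ^ 3 - ((α + 1) * (n : ℝ) + 2 * α - 6) * x ^ 2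
        + (α * (n : ℝ) ^ 2 + (2 * α ^ 2 - 3 * α - 1) * (n : ℝ) - 4 * α - 3) * x
        - 2 * α ^ 2 * (n : ℝ) ^ 2 + (18 * α ^ 2 - 14 * α + 8) * (n : ℝ)
        - 72 * α ^ 2 + 118 * α - 56 = 0} (rhoAlpha α (G3 n)) := by
  open completeJoinCompleteSumEmpty in
  have : NeZero (n - 6) := ⟨by omega⟩
  have hm : (1 : ℝ) ≤ (n - 6 : ℕ) := by exact_mod_cast (by omega : 1 ≤ n - 6)
  have hcast : (n : ℝ) = (n - 6 : ℕ) + 6 := by rw [Nat.cast_sub (by omega)]; ring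
  have hroots : {x | psi α n x = 0} = spectrum ℝ (quotientMatrix α 2 (n - 6) 4) := by
    ext x
    rw [mem_spectrum_quotientMatrix_two_four_iff, ← hcast]
    rfl
  obtain ⟨t, hψt, ht₁, ht₂⟩ := exists_psi_nonpos hα0 hα1 hm
  obtain ⟨z, htz, hz⟩ := exists_psi_root_ge α _ hψt
  change IsGreatest {x | psi α n x = 0}
    (sSup (spectrum ℝ (aAlphaMatrix α (completeJoinCompleteSumEmpty 2 (n - 6) 4))))
  rw [hroots]
  refine isGreatest_csSup_of_subset_union (Matrix.finite_spectrum _)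
    (spectrum_quotientMatrix_subset α) (spectrum_aAlphaMatrix_subset α)
    ((mem_spectrum_quotientMatrix_two_four_iff α z).2 hz) ?_
  simp only [Set.mem_insert_iff, Set.mem_singleton_iff]
  rintro e (rfl | rfl | rfl) <;> push_cast <;> linarith
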